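/- Let q be a primitive form of negative discriminant D < -4 and f an odd prime. For 0 ≤ g₁, g₂ ≤ f with f ∤ q(gᵢ,1) (or gᵢ = f), if q·R_{g₁} and q·R_{g₂} are properly equivalent then g₁ = g₂. In other words, the f - (D/f) primitive forms q·R_g are pairwise inequivalent. -/

import Mathlib

/-- An integral binary quadratic form ax² + bxy + cy². -/
structure BQF where
  a : ℤ
  b : ℤ
  c : ℤ

namespace BQF

/-- Value of the form at (x, y). -/
def eval (q : BQF) (x y : ℤ) : ℤ := q.a * x ^ 2 + q.b * x * y + q.c * y ^ 2

/-- Discriminant b² - 4ac. -/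
def disc (q : BQF) : ℤ := q.b ^ 2 - 4 * q.a * q.c

/-- A form is primitive if gcd(a, b, c) = 1. -/
def IsPrimitive (q : BQF) : Prop := Int.gcd (Int.gcd q.a q.b) q.c = 1

/-- Right action: (q·M)(x,y) = q(px + ry, sx + ty) for M = [[p,r],[s,t]]. -/
def act (q : BQF) (M : Matrix (Fin 2) (Fin 2) ℤ) : BQF :=
  ⟨q.eval (M 0 0) (M 1 0),
   q.eval (M 0 0 + M 0 1) (M 1 0 + M 1 1) - q.eval (M 0 0) (M 1 0) - q.eval (M 0 1) (M 1 1),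
   q.eval (M 0 1) (M 1 1)⟩

/-- Proper equivalence: equivalence under the SL₂(ℤ) action. -/
def ProperEquiv (q q' : BQF) : Prop :=
  ∃ U : Matrix.SpecialLinearGroup (Fin 2) ℤ, q.act U.1 = q'

end BQF

/-- R_g = [[f,g],[0,1]] for g < f, and R_f = [[1,0],[0,f]] when g = f. -/
def Rmat (f g : ℤ) : Matrix (Fin 2) (Fin 2) ℤ :=
  if g = f then !![1, 0; 0, f] else !![f, g; 0, 1]

/-!
If `q·R₁·U = q·R₂` with `det Rᵢ = f` and `U ∈ SL₂(ℤ)`, then `M = R₁ U adj(R₂)` satisfies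
`q·M = f²·q` and `det M = f²`. For primitive `q` this forces `M = [[(t-bu)/2, -cu], [au, (t+bu)/2]]`
with `t² - Du² = 4f²`, so `|u| < f` because `D < -4`. If `f ∣ u`, then `u = 0`, `M = ±f`, and the
column lattices of `R₁` and `R₂` coincide, which for the matrices `R_g` forces `g₁ = g₂`. Otherwise
`M v ≡ 0 mod f` for every column `v` of `R₂`, and `v₁ (Mv)₀ - v₀ (Mv)₁ = -u q(v)` gives `f ∣ q(v)`;
by symmetry this holds on both sides and contradicts `f ∤ q(gᵢ, 1)`.
-/

lemma Matrix.eq_or_eq_neg_of_smul_eq_smul {m n : Type*} [Fintype m] [Fintype n] {α k : ℤ}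
    {A B : Matrix m n ℤ} (hk : k ≠ 0) (hα : α ^ 2 = k ^ 2) (h : α • B = k • A) :
    B = A ∨ B = -A := by
  rcases sq_eq_sq_iff_eq_or_eq_neg.mp hα with rfl | rfl
  · exact Or.inl (smul_right_injective _ hk h)
  · rw [neg_smul, neg_eq_iff_eq_neg, ← smul_neg] at h
    exact Or.inr (smul_right_injective _ hk h)

namespace BQF

lemma act_act (q : BQF) (M N : Matrix (Fin 2) (Fin 2) ℤ) :
    (q.act M).act N = q.act (M * N) := by
  simp only [act, eval, Matrix.mul_apply, Fin.sum_univ_two, mk.injEq]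
  refine ⟨by ring, by ring, by ring⟩

lemma act_smul_one (q : BQF) (k : ℤ) :
    q.act (k • 1) = ⟨k ^ 2 * q.a, k ^ 2 * q.b, k ^ 2 * q.c⟩ := by
  simp only [act, eval, Matrix.smul_apply, Matrix.one_apply, mk.injEq, smul_eq_mul]
  simp only [Fin.isValue, ↓reduceIte, one_ne_zero, zero_ne_one, mul_one, mul_zero, add_zero,
    zero_add]
  refine ⟨by ring, by ring, by ring⟩

lemma act_one (q : BQF) : q.act 1 = q := by
  simpa using q.act_smul_one 1

lemma ProperEquiv.symm {q q' : BQF} (h : q.ProperEquiv q') : q'.ProperEquiv q := by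
  obtain ⟨U, rfl⟩ := h
  refine ⟨U⁻¹, ?_⟩
  rw [act_act, ← Matrix.SpecialLinearGroup.coe_mul, mul_inv_cancel,
    Matrix.SpecialLinearGroup.coe_one, act_one]

lemma a_ne_zero_of_disc_neg {q : BQF} (h : q.disc < 0) : q.a ≠ 0 := by
  intro ha
  simp only [disc, ha] at h
  nlinarith [sq_nonneg q.b]

lemma IsPrimitive.dvd_of_dvd_mul {q : BQF} (hq : q.IsPrimitive) {n m : ℤ}
    (ha : n ∣ q.a * m) (hb : n ∣ q.b * m) (hc : n ∣ q.c * m) : n ∣ m := by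
  obtain ⟨s, t, hst⟩ := Int.isCoprime_iff_gcd_eq_one.mpr hq
  have hab : n ∣ (Int.gcd q.a q.b : ℤ) * m := by
    rw [Int.gcd_eq_gcd_ab, add_mul, mul_right_comm, mul_right_comm q.b]
    exact dvd_add (ha.mul_right _) (hb.mul_right _)
  have : m = s * ((Int.gcd q.a q.b : ℤ) * m) + t * (q.c * m) := by
    linear_combination -m * hst
  rw [this]
  exact dvd_add (hab.mul_left _) (hc.mul_left _)

/-- `M = [[(t - bu)/2, -cu], [au, (t + bu)/2]]` with `t = M 0 0 + M 1 1`: the matrix of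
multiplication by `(t + u√D)/2` on the lattice `[a, (b + √D)/2]`, whose norm form is `q`. -/
def IsMultiplication (q : BQF) (u : ℤ) (M : Matrix (Fin 2) (Fin 2) ℤ) : Prop :=
  M 1 0 = q.a * u ∧ M 0 1 = -(q.c * u) ∧ M 1 1 - M 0 0 = q.b * u

namespace IsMultiplication

variable {q : BQF} {u : ℤ} {M : Matrix (Fin 2) (Fin 2) ℤ}

lemma four_mul_det (h : q.IsMultiplication u M) :
    4 * M.det = (M 0 0 + M 1 1) ^ 2 - q.disc * u ^ 2 := by
  obtain ⟨h₁₀, h₀₁, hdiag⟩ := h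
  rw [Matrix.det_fin_two, h₁₀, h₀₁, disc]
  linear_combination -(M 1 1 - M 0 0 + q.b * u) * hdiag

lemma abs_lt_of_det_eq_sq (h : q.IsMultiplication u M) (hD : q.disc < -4) {k : ℤ} (hk : 0 < k)
    (hdet : M.det = k ^ 2) : |u| < k := by
  refine abs_lt_of_sq_lt_sq ?_ hk.le
  have h4 := h.four_mul_det
  have hDu : q.disc * u ^ 2 ≤ -5 * u ^ 2 := mul_le_mul_of_nonneg_right (by omega) (sq_nonneg u)
  rw [hdet] at h4
  nlinarith [sq_nonneg (M 0 0 + M 1 1)]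

lemma cross_eq_neg_mul_eval (h : q.IsMultiplication u M) (x y : ℤ) :
    y * (M 0 0 * x + M 0 1 * y) - x * (M 1 0 * x + M 1 1 * y) = -(u * q.eval x y) := by
  obtain ⟨h₁₀, h₀₁, hdiag⟩ := h
  rw [h₁₀, h₀₁, eval]
  linear_combination -x * y * hdiag

lemma eq_smul_one (h : q.IsMultiplication 0 M) : M = M 0 0 • 1 := by
  obtain ⟨h₁₀, h₀₁, hdiag⟩ := h
  rw [mul_zero, sub_eq_zero] at hdiag
  ext i j
  fin_cases i <;> fin_cases j <;> simp [h₁₀, h₀₁, hdiag]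

end IsMultiplication

lemma exists_isMultiplication_of_act_eq_det_smul {q : BQF} (hq : q.IsPrimitive) (ha : q.a ≠ 0)
    {M : Matrix (Fin 2) (Fin 2) ℤ} (hdet : M.det ≠ 0)
    (hM : q.act M = ⟨M.det * q.a, M.det * q.b, M.det * q.c⟩) :
    ∃ u, q.IsMultiplication u M := by
  simp only [act, eval, mk.injEq] at hM
  obtain ⟨E₁, E₃, E₂⟩ := hM
  have h2det : 2 * M.det ≠ 0 := mul_ne_zero two_ne_zero hdet
  have hβ : q.a * M 0 1 + q.c * M 1 0 = 0 := by
    refine (mul_eq_zero.mp ?_).resolve_left h2det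
    rw [Matrix.det_fin_two] at E₁ E₂ E₃ ⊢
    linear_combination M 1 1 * E₃ - 2 * M 1 0 * E₂
  have hδ : q.a * (M 1 1 - M 0 0) = q.b * M 1 0 := by
    rw [← sub_eq_zero]
    refine (mul_eq_zero.mp ?_).resolve_left h2det
    rw [Matrix.det_fin_two] at E₁ E₂ E₃ ⊢
    linear_combination M 1 0 * E₃ - 2 * M 1 1 * E₁
  obtain ⟨u, hu⟩ : q.a ∣ M 1 0 :=
    hq.dvd_of_dvd_mul (dvd_mul_right _ _) ⟨_, hδ.symm⟩ ⟨-M 0 1, by linear_combination hβ⟩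
  refine ⟨u, hu, mul_left_cancel₀ ha ?_, mul_left_cancel₀ ha ?_⟩
  · linear_combination hβ - q.c * hu
  · linear_combination hδ + q.b * hu

theorem exists_mul_eq_or_dvd_eval_of_properEquiv {q : BQF} (hq : q.IsPrimitive)
    (hD : q.disc < -4) {f : ℕ} (hf : f.Prime) {R₁ R₂ : Matrix (Fin 2) (Fin 2) ℤ}
    (h₁ : R₁.det = f) (h₂ : R₂.det = f) (h : (q.act R₁).ProperEquiv (q.act R₂)) :
    (∃ V, R₁ * V = R₂) ∨ ∀ j, (f : ℤ) ∣ q.eval (R₂ 0 j) (R₂ 1 j) := by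
  obtain ⟨U, hU⟩ := h
  have hf0 : (f : ℤ) ≠ 0 := by exact_mod_cast hf.ne_zero
  set M := R₁ * U * R₂.adjugate with hM
  have hMR : M * R₂ = (f : ℤ) • (R₁ * U) := by
    rw [hM, mul_assoc, Matrix.adjugate_mul, h₂, mul_smul_comm, mul_one]
  have hdet : M.det = f ^ 2 := by
    rw [hM, Matrix.det_mul, Matrix.det_mul, Matrix.det_adjugate, h₁, h₂, U.2, Fintype.card_fin,
      pow_one, mul_one, sq]
  have hact : q.act M = ⟨M.det * q.a, M.det * q.b, M.det * q.c⟩ := by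
    rw [hdet, hM, ← act_act, ← act_act, hU, act_act, Matrix.mul_adjugate, h₂, act_smul_one]
  obtain ⟨u, hu⟩ := exists_isMultiplication_of_act_eq_det_smul hq
    (a_ne_zero_of_disc_neg (by linarith)) (by rw [hdet]; positivity) hact
  have hu_lt : |u| < f := hu.abs_lt_of_det_eq_sq hD (by exact_mod_cast hf.pos) hdet
  by_cases hfu : (f : ℤ) ∣ u
  · left
    rw [Int.eq_zero_of_abs_lt_dvd hfu hu_lt] at hu
    have hsq : M 0 0 ^ 2 = f ^ 2 := by
      rw [← hdet, Matrix.det_fin_two, hu.1, hu.2.1]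
      linear_combination -M 0 0 * hu.2.2
    rw [hu.eq_smul_one, smul_mul_assoc, one_mul] at hMR
    obtain hR | hR := Matrix.eq_or_eq_neg_of_smul_eq_smul hf0 hsq hMR
    · exact ⟨U, hR.symm⟩
    · exact ⟨-(U : Matrix (Fin 2) (Fin 2) ℤ), by rw [Matrix.mul_neg, hR]⟩
  · right
    intro j
    have hcross := hu.cross_eq_neg_mul_eval (R₂ 0 j) (R₂ 1 j)
    have hMR₀ := congrFun (congrFun hMR 0) j
    have hMR₁ := congrFun (congrFun hMR 1) j
    simp only [Matrix.mul_apply, Fin.sum_univ_two, Matrix.smul_apply, smul_eq_mul] at hMR₀ hMR₁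
    have hdvd : (f : ℤ) ∣ u * q.eval (R₂ 0 j) (R₂ 1 j) := by
      rw [← dvd_neg, ← hcross, hMR₀, hMR₁]
      exact dvd_sub ((dvd_mul_right _ _).mul_left _) ((dvd_mul_right _ _).mul_left _)
    exact ((Nat.prime_iff_prime_int.mp hf).dvd_or_dvd hdvd).resolve_left hfu

end BQF

lemma det_Rmat (f g : ℤ) : (Rmat f g).det = f := by
  unfold Rmat
  split_ifs <;> simp [Matrix.det_fin_two]

lemma eq_of_Rmat_mul_eq {f g₁ g₂ : ℤ} (hf : 1 < f) (h₁0 : 0 ≤ g₁) (h₁f : g₁ ≤ f)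
    (h₂0 : 0 ≤ g₂) (h₂f : g₂ ≤ f) {V : Matrix (Fin 2) (Fin 2) ℤ}
    (hV : Rmat f g₁ * V = Rmat f g₂) : g₁ = g₂ := by
  have hf1 : ∀ x, f * x ≠ 1 := fun x hx => hf.ne' (Int.eq_one_of_mul_eq_one_right (by omega) hx)
  unfold Rmat at hV
  rw [Matrix.eta_fin_two V] at hV
  split_ifs at hV with e₁ e₂ e₂ <;>
    simp only [Matrix.mul_fin_two, EmbeddingLike.apply_eq_iff_eq, Matrix.vecCons_inj, and_true,
      one_mul, zero_mul, add_zero, zero_add] at hV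
  · rw [e₁, e₂]
  · exact absurd hV.2.2 (hf1 _)
  · obtain ⟨⟨h₀₀, -⟩, h₁₀, -⟩ := hV
    rw [h₁₀, mul_zero, add_zero] at h₀₀
    exact absurd h₀₀ (hf1 _)
  · obtain ⟨⟨-, h₀₁⟩, -, h₁₁⟩ := hV
    rw [h₁₁, mul_one] at h₀₁
    have := Int.eq_zero_of_abs_lt_dvd (⟨V 0 1, by linarith⟩ : f ∣ g₂ - g₁)
      (by rw [abs_lt]; omega)
    omega

lemma dvd_eval_of_properEquiv_Rmat {q : BQF} (hq : q.IsPrimitive) (hD : q.disc < -4) {f : ℕ}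
    (hf : f.Prime) {g g' : ℤ} (h0 : 0 ≤ g) (hgf : g ≤ f) (h0' : 0 ≤ g') (hgf' : g' ≤ f)
    (hne : g ≠ g') (hg' : g' ≠ f) (h : (q.act (Rmat f g)).ProperEquiv (q.act (Rmat f g'))) :
    (f : ℤ) ∣ q.eval g' 1 := by
  obtain ⟨V, hV⟩ | hdvd :=
    BQF.exists_mul_eq_or_dvd_eval_of_properEquiv hq hD hf (det_Rmat f g) (det_Rmat f g') h
  · exact absurd (eq_of_Rmat_mul_eq (by exact_mod_cast hf.one_lt) h0 hgf h0' hgf' hV) hne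
  · simpa [Rmat, hg'] using hdvd 1

theorem stmt18_general (q : BQF) (D : ℤ) (hq : q.IsPrimitive) (hd : q.disc = D)
    (hD : D < -4) (f : ℕ) (hf : f.Prime)
    (g₁ g₂ : ℤ) (h₁0 : 0 ≤ g₁) (h₁f : g₁ ≤ f) (h₂0 : 0 ≤ g₂) (h₂f : g₂ ≤ f)
    (hp₁ : g₁ = f ∨ ¬ (f : ℤ) ∣ q.eval g₁ 1) (hp₂ : g₂ = f ∨ ¬ (f : ℤ) ∣ q.eval g₂ 1)
    (heq : BQF.ProperEquiv (q.act (Rmat f g₁)) (q.act (Rmat f g₂))) : g₁ = g₂ := by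
  subst hd
  by_contra hne
  by_cases hg₂ : g₂ = f
  · have hg₁ : g₁ ≠ f := hg₂ ▸ hne
    exact hp₁.resolve_left hg₁
      (dvd_eval_of_properEquiv_Rmat hq hD hf h₂0 h₂f h₁0 h₁f (Ne.symm hne) hg₁ heq.symm)
  · exact hp₂.resolve_left hg₂ (dvd_eval_of_properEquiv_Rmat hq hD hf h₁0 h₁f h₂0 h₂f hne hg₂ heq)

theorem stmt18 (q : BQF) (D : ℤ) (hq : q.IsPrimitive) (hd : q.disc = D)
    (hD : D < -4) (f : ℕ) (hf : f.Prime) (hodd : Odd f)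
    (g₁ g₂ : ℤ) (h₁0 : 0 ≤ g₁) (h₁f : g₁ ≤ f) (h₂0 : 0 ≤ g₂) (h₂f : g₂ ≤ f)
    (hp₁ : g₁ = f ∨ ¬ (f : ℤ) ∣ q.eval g₁ 1) (hp₂ : g₂ = f ∨ ¬ (f : ℤ) ∣ q.eval g₂ 1)
    (heq : BQF.ProperEquiv (q.act (Rmat f g₁)) (q.act (Rmat f g₂))) : g₁ = g₂ :=
  stmt18_general q D hq hd hD f hf g₁ g₂ h₁0 h₁f h₂0 h₂f hp₁ hp₂ heq
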